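/- arXiv:2005.02212 — 5 statements merged into one kernel-verified Lean document; each statement's English description precedes it below -/
import Mathlib

section
/- With the filtration 𝔤̃ᵢ as above, if X ∈ 𝔤̃ᵢ but X ∉ 𝔤̃_{i−1} (with 𝔤̃_{−1} = 0), then there exist U₁, …, Uᵢ ∈ 𝔲 such that ad_{U₁} ⋯ ad_{Uᵢ}(X) is a nonzero element of the centralizer Z_𝔤(𝔲). -/
/-- If `X ∈ 𝔤̃ᵢ` but `X ∉ 𝔤̃_{i-1}` (with `𝔤̃_{-1} = 0`; note that for `i = 0`
the empty composition is the identity, so the second hypothesis then says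
`X ≠ 0`), then some composition `ad_{U₁} ⋯ ad_{Uᵢ}` with all `Uⱼ ∈ u` sends `X`
to a nonzero element of the centralizer of `u`. -/
theorem stmt3 (L : Type*) [LieRing L] [LieAlgebra ℝ L] [FiniteDimensional ℝ L]
    (u : LieSubalgebra ℝ L)
    (hu_ab : ∀ x ∈ u, ∀ y ∈ u, ⁅x, y⁆ = 0)
    (hu_nil : ∀ W ∈ u, IsNilpotent (LieAlgebra.ad ℝ L W))
    (i : ℕ) (X : L)
    (hXi : ∀ U : Fin (i + 1) → L, (∀ j, U j ∈ u) →
      (List.ofFn fun j => LieAlgebra.ad ℝ L (U j)).prod X = 0)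
    (hXnot : ¬ ∀ U : Fin i → L, (∀ j, U j ∈ u) →
      (List.ofFn fun j => LieAlgebra.ad ℝ L (U j)).prod X = 0) :
    ∃ U : Fin i → L, (∀ j, U j ∈ u) ∧
      (List.ofFn fun j => LieAlgebra.ad ℝ L (U j)).prod X ≠ 0 ∧
      ∀ W ∈ u, ⁅W, (List.ofFn fun j => LieAlgebra.ad ℝ L (U j)).prod X⁆ = 0 := by
  push_neg at hXnot
  obtain ⟨U, hUu, hUne⟩ := hXnot
  refine ⟨U, hUu, hUne, fun W hW => ?_⟩
  have h := hXi (Fin.cons W U : Fin (i+1) → L) (fun j => by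
    induction j using Fin.cases with
    | zero => simpa using hW
    | succ j => simpa using hUu j)
  have hofn : (List.ofFn fun j : Fin (i + 1) => LieAlgebra.ad ℝ L ((Fin.cons W U : Fin (i+1) → L) j))
      = LieAlgebra.ad ℝ L W :: (List.ofFn fun j : Fin i => LieAlgebra.ad ℝ L (U j)) := by
    rw [List.ofFn_succ]
    simp
  rw [hofn, List.prod_cons] at h
  simpa using h
end

section
/- Let g₁, …, g_ℓ be linearly independent homogeneous real polynomials in k variables, with gᵢ homogeneous of degree dᵢ. Then there exists C > 0 depending only on g₁, …, g_ℓ such that for all R ≥ 1, all ε > 0, and all real coefficients x₁, …, x_ℓ: if |∑ᵢ xᵢ gᵢ(s)| < ε for every s ∈ [−R, R]^k, then |xᵢ| < C ε R^{−dᵢ} for every i. -/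
/-!
Linear independence of the `gᵢ` means the functionals `x ↦ ∑ xᵢ gᵢ(s)`, for `s` in the unit cube,
have no common zero besides `x = 0` (a polynomial vanishing on a box with infinite sides is zero),
so they span the dual space and every coordinate `xᵢ` is bounded by a fixed multiple of
`sup_{|s| ≤ 1} |∑ xᵢ gᵢ(s)|`. Homogeneity turns the cube `[-R, R]^k` into the unit cube:
`∑ xᵢ gᵢ(R s) = ∑ (R^{dᵢ} xᵢ) gᵢ(s)`.
-/

open MvPolynomial Submodule

theorem MvPolynomial.IsHomogeneous.eval_smul {σ R : Type*} [CommSemiring R]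
    {φ : MvPolynomial σ R} {n : ℕ} (hφ : φ.IsHomogeneous n) (c : R) (s : σ → R) :
    eval (c • s) φ = c ^ n * eval s φ := by
  rw [eval_eq, eval_eq, Finset.mul_sum]
  refine Finset.sum_congr rfl fun e he => ?_
  simp only [Pi.smul_apply, smul_eq_mul, mul_pow, Finset.prod_mul_distrib,
    Finset.prod_pow_eq_pow_sum, ← hφ.degree_eq_sum_deg_support he]
  ring

theorem exists_norm_le_mul_of_mem_span {𝕜 M S : Type*} [NormedField 𝕜] [AddCommGroup M]
    [Module 𝕜 M] {f : S → M →ₗ[𝕜] 𝕜} {T : Set S} {φ : M →ₗ[𝕜] 𝕜}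
    (hφ : φ ∈ span 𝕜 (f '' T)) :
    ∃ C ≥ 0, ∀ (y : M) (ε : ℝ), (∀ t ∈ T, ‖f t y‖ ≤ ε) → ‖φ y‖ ≤ C * ε := by
  induction hφ using span_induction with
  | mem φ hφ =>
    obtain ⟨t, ht, rfl⟩ := hφ
    exact ⟨1, zero_le_one, fun y ε hy => by simpa using hy t ht⟩
  | zero => exact ⟨0, le_rfl, fun y ε _ => by simp⟩
  | add φ ψ _ _ hφ hψ =>
    obtain ⟨C, hC, hφ⟩ := hφ
    obtain ⟨D, hD, hψ⟩ := hψ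
    refine ⟨C + D, add_nonneg hC hD, fun y ε hy => ?_⟩
    calc ‖(φ + ψ) y‖ ≤ ‖φ y‖ + ‖ψ y‖ := norm_add_le _ _
      _ ≤ C * ε + D * ε := add_le_add (hφ y ε hy) (hψ y ε hy)
      _ = (C + D) * ε := by ring
  | smul c φ _ hφ =>
    obtain ⟨C, hC, hφ⟩ := hφ
    refine ⟨‖c‖ * C, mul_nonneg (norm_nonneg c) hC, fun y ε hy => ?_⟩
    rw [LinearMap.smul_apply, norm_smul, mul_assoc]
    exact mul_le_mul_of_nonneg_left (hφ y ε hy) (norm_nonneg c)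

namespace MvPolynomial

variable {ι σ K : Type*} [Fintype ι] [Field K]

noncomputable def evalCombination (g : ι → MvPolynomial σ K) (t : σ → K) : (ι → K) →ₗ[K] K :=
  (aeval t).toLinearMap ∘ₗ Fintype.linearCombination K g

theorem evalCombination_apply (g : ι → MvPolynomial σ K) (t : σ → K) (x : ι → K) :
    evalCombination g t x = ∑ m, x m * eval t (g m) := by
  simp [evalCombination, Fintype.linearCombination_apply]

theorem span_evalCombination_eq_top {g : ι → MvPolynomial σ K} (hind : LinearIndependent K g)
    {s : σ → Set K} (hs : ∀ j, (s j).Infinite) :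
    span K (evalCombination g '' Set.univ.pi s) = ⊤ := by
  refine span_eq_top_of_ne_zero fun z hz => ?_
  by_contra! hzero
  have hcomb : Fintype.linearCombination K g z = 0 :=
    funext_set s hs fun t ht => by simpa [evalCombination] using hzero _ ⟨t, ht, rfl⟩
  exact hz (hind.fintypeLinearCombination_injective (hcomb.trans (map_zero _).symm))

end MvPolynomial

theorem exists_abs_le_mul_of_abs_eval_le_on_unitCube {ι σ : Type*} [Fintype ι]
    {g : ι → MvPolynomial σ ℝ} (hind : LinearIndependent ℝ g) :
    ∃ C ≥ 0, ∀ (y : ι → ℝ) (ε : ℝ), (∀ s : σ → ℝ, (∀ j, |s j| ≤ 1) →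
      |∑ m, y m * eval s (g m)| ≤ ε) → ∀ i, |y i| ≤ C * ε := by
  have hspan := span_evalCombination_eq_top hind (s := fun _ => Set.Icc (-1) 1)
    fun _ => Set.Icc_infinite (by norm_num)
  have hproj (i : ι) := exists_norm_le_mul_of_mem_span (hspan ▸ mem_top (x := LinearMap.proj i))
  choose C hC0 hC using hproj
  refine ⟨∑ i, C i, Finset.sum_nonneg fun i _ => hC0 i, fun y ε hy i => ?_⟩
  have hy' : ∀ t ∈ Set.univ.pi fun _ => Set.Icc (-1) 1, ‖evalCombination g t y‖ ≤ ε :=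
    fun t ht => by
      rw [evalCombination_apply, Real.norm_eq_abs]
      exact hy t fun j => abs_le.mpr (ht j trivial)
  have hε : 0 ≤ ε := (norm_nonneg _).trans (hy' 0 fun j _ => by simp)
  calc |y i| ≤ C i * ε := by simpa using hC i y ε hy'
    _ ≤ (∑ i, C i) * ε :=
      mul_le_mul_of_nonneg_right (Finset.single_le_sum (fun i _ => hC0 i) (Finset.mem_univ i)) hε

/-- Coefficient decay for linearly independent homogeneous polynomials: if the
combination `∑ xᵢ gᵢ` is `< ε` in absolute value on the cube `[-R, R]^k`, then
each coefficient satisfies `|xᵢ| < C ε R^{-dᵢ}`. -/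
theorem stmt4 (k ℓ : ℕ) (g : Fin ℓ → MvPolynomial (Fin k) ℝ) (d : Fin ℓ → ℕ)
    (hhom : ∀ i, (g i).IsHomogeneous (d i))
    (hind : LinearIndependent ℝ g) :
    ∃ C > 0, ∀ R : ℝ, 1 ≤ R → ∀ ε > 0, ∀ x : Fin ℓ → ℝ,
      (∀ s : Fin k → ℝ, (∀ j, |s j| ≤ R) →
        |∑ i, x i * MvPolynomial.eval s (g i)| < ε) →
      ∀ i, |x i| < C * ε / R ^ (d i) := by
  obtain ⟨C, hC0, hC⟩ := exists_abs_le_mul_of_abs_eval_le_on_unitCube hind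
  refine ⟨C + 1, by positivity, fun R hR ε hε x hx i => ?_⟩
  have hR0 : 0 < R := zero_lt_one.trans_le hR
  have hscaled : ∀ s : Fin k → ℝ, (∀ j, |s j| ≤ 1) →
      |∑ m, R ^ d m * x m * eval s (g m)| ≤ ε := by
    intro s hs
    have hRs : ∀ j, |(R • s) j| ≤ R := fun j => by
      simpa [abs_mul, abs_of_pos hR0] using mul_le_mul_of_nonneg_left (hs j) hR0.le
    simpa [(hhom _).eval_smul, mul_assoc, mul_left_comm] using (hx (R • s) hRs).le
  have hxi : R ^ d i * |x i| ≤ C * ε := by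
    simpa [abs_mul, abs_of_pos hR0] using hC _ ε hscaled i
  rw [lt_div_iff₀ (pow_pos hR0 _), mul_comm]
  linarith
end

section
/- Let 𝔤 be a finite-dimensional real Lie algebra, 𝔲 an abelian ad-unipotent subalgebra, and suppose 𝔤 decomposes as 𝔤 = ⊕ᵢ 𝔤ᵢ where 𝔤ᵢ ⊆ 𝔤̃ᵢ is complementary to 𝔤̃_{i−1}. For U ∈ 𝔲 and X ∈ 𝔤_ℓ, and πᵢ : 𝔤 → 𝔤ᵢ the projection, the map s ↦ πᵢ(exp(ad_{s₁U₁ + ⋯ + s_kU_k})(X)) is a polynomial map in (s₁,…,s_k) of degree at most max{ℓ − i, 0}, with coefficients depending linearly on X. -/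
/-!
The truncated exponential of `ad_{∑ sⱼ Uⱼ}` expands as a sum over words `w` of length `t` of
`(1/t!) (∏ₘ s_{w m}) ad_{U_{w 1}} ⋯ ad_{U_{w t}}`. A word of length `t` maps `𝔤_ℓ ⊆ 𝔤̃_ℓ` into
`𝔤̃_{ℓ-t}`, which `πᵢ` kills as soon as `ℓ - t < i`; so only words of length at most `ℓ - i`
survive, and grouping them by their exponent vector gives the polynomial.
-/

open Finset

section Words

variable {R M N α : Type*} [Semiring R] [AddCommMonoid M] [Module R M]
  [AddCommMonoid N] [Module R N]

/-- For `a = ad` and `S = 𝔲`, this says `x ∈ 𝔤̃_{n-1}`. -/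
def KilledByWords (a : α → Module.End R M) (S : Set α) (n : ℕ) (x : M) : Prop :=
  ∀ V : Fin n → α, (∀ j, V j ∈ S) → (List.ofFn fun j => a (V j)).prod x = 0

variable {a : α → Module.End R M} {S : Set α} {n : ℕ} {x : M}

theorem KilledByWords.prod_ofFn_apply_eq_zero (hx : KilledByWords a S n x) {m : ℕ}
    (V : Fin m → α) (hV : ∀ j, V j ∈ S) (hnm : n ≤ m) :
    (List.ofFn fun j => a (V j)).prod x = 0 := by
  obtain ⟨d, rfl⟩ := Nat.exists_eq_add_of_le' hnm
  rw [List.ofFn_add, List.prod_append, Module.End.mul_apply, hx _ fun j => hV _, map_zero]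

theorem KilledByWords.prod_ofFn_apply (hx : KilledByWords a S n x) {t : ℕ}
    (W : Fin t → α) (hW : ∀ j, W j ∈ S) :
    KilledByWords a S (n - t) ((List.ofFn fun j => a (W j)).prod x) := by
  intro V hV
  have hVW : ∀ j, Fin.append V W j ∈ S := Fin.addCases (by simpa using hV) (by simpa using hW)
  simpa [List.ofFn_add] using hx.prod_ofFn_apply_eq_zero (Fin.append V W) hVW (by omega)

theorem KilledByWords.map_prod_ofFn_apply_eq_zero {π : M →ₗ[R] N} {i ℓ : ℕ}
    (hπ : ∀ i' < i, ∀ y, KilledByWords a S (i' + 1) y → π y = 0)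
    (hx : KilledByWords a S (ℓ + 1) x) {t : ℕ} (W : Fin t → α) (hW : ∀ j, W j ∈ S)
    (ht : ℓ - i < t) : π ((List.ofFn fun j => a (W j)).prod x) = 0 := by
  by_cases htℓ : t ≤ ℓ
  · refine hπ (ℓ - t) (by omega) _ ?_
    rw [show ℓ - t + 1 = ℓ + 1 - t by omega]
    exact hx.prod_ofFn_apply W hW
  · rw [hx.prod_ofFn_apply_eq_zero W hW (by omega), map_zero]

end Words

section Expansion

variable {R A ι : Type*} [CommSemiring R] [Semiring A] [Algebra R A] [Fintype ι]

theorem sum_smul_pow_eq_sum_prod_ofFn (s : ι → R) (a : ι → A) (t : ℕ) :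
    (∑ j, s j • a j) ^ t = ∑ w : Fin t → ι, (∏ m, s (w m)) • (List.ofFn fun m => a (w m)).prod := by
  induction t with
  | zero => simp
  | succ t ih =>
    rw [pow_succ', ih, Finset.sum_mul_sum, ← (Fin.consEquiv fun _ => ι).sum_comp,
      Fintype.sum_prod_type]
    refine Fintype.sum_congr _ _ fun j => Fintype.sum_congr _ _ fun w => ?_
    simp only [Fin.consEquiv_apply, Fin.prod_univ_succ, Fin.cons_zero, Fin.cons_succ,
      List.ofFn_succ, List.prod_cons, Algebra.mul_smul_comm, Algebra.smul_mul_assoc, smul_smul,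
      mul_comm]

theorem sum_smul_sum_smul_pow_eq_sum_sigma (T : Finset ℕ) (c : ℕ → R) (s : ι → R) (a : ι → A) :
    ∑ t ∈ T, c t • (∑ j, s j • a j) ^ t =
      ∑ p ∈ T.sigma fun t => (univ : Finset (Fin t → ι)),
        (∏ m, s (p.2 m)) • c p.1 • (List.ofFn fun m => a (p.2 m)).prod := by
  simp_rw [sum_smul_pow_eq_sum_prod_ofFn, Finset.smul_sum, smul_comm (c _)]
  rw [Finset.sum_sigma]

end Expansion

section Monomials

variable {ι : Type*} [DecidableEq ι] {t : ℕ}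

noncomputable def wordExponent (w : Fin t → ι) : ι →₀ ℕ :=
  Multiset.toFinsupp (univ.val.map w)

theorem wordExponent_sum (w : Fin t → ι) : ((wordExponent w).sum fun _ e => e) = t :=
  (Multiset.toFinsupp_sum_eq _).trans (by simp)

theorem prod_pow_wordExponent [Fintype ι] {M : Type*} [CommMonoid M] (w : Fin t → ι)
    (s : ι → M) : ∏ j, s j ^ wordExponent w j = ∏ m, s (w m) := by
  calc ∏ j, s j ^ wordExponent w j
      = ∏ j, s j ^ (univ.val.map w).count j := rfl
    _ = ∏ j ∈ (univ.val.map w).toFinset, s j ^ (univ.val.map w).count j := by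
        refine (Finset.prod_subset (subset_univ _) fun j _ hj => ?_).symm
        rw [Multiset.count_eq_zero.2 (by simpa using hj), pow_zero]
    _ = ∏ m, s (w m) := by
        rw [← Finset.prod_multiset_map_count, Multiset.map_map, ← Finset.prod_map_val]; rfl

end Monomials

theorem Finset.sum_image_smul_sum_filter {σ κ R M : Type*} [DecidableEq κ] [Monoid R]
    [AddCommMonoid M] [DistribMulAction R M] (S : Finset σ) (e : σ → κ) (m : κ → R)
    (f : σ → M) :
    ∑ μ ∈ S.image e, m μ • ∑ p ∈ S with e p = μ, f p = ∑ p ∈ S, m (e p) • f p :=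
  Finset.sum_image' _ fun p _ => by
    rw [Finset.smul_sum]
    exact Finset.sum_congr rfl fun q hq => by rw [(Finset.mem_filter.1 hq).2]

theorem stmt11_general (L : Type*) [LieRing L] [LieAlgebra ℝ L]
    (u : LieSubalgebra ℝ L)
    (k : ℕ) (U : Fin k → L) (hU : ∀ j, U j ∈ u)
    (g' : ℕ → Submodule ℝ L)
    (hg' : ∀ i : ℕ, ∀ X ∈ g' i, ∀ V : Fin (i + 1) → L, (∀ j, V j ∈ u) →
      (List.ofFn fun j => LieAlgebra.ad ℝ L (V j)).prod X = 0)
    (π : ℕ → L →ₗ[ℝ] L)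
    (hπker : ∀ i i' : ℕ, i' < i → ∀ X : L,
      (∀ V : Fin (i' + 1) → L, (∀ j, V j ∈ u) →
        (List.ofFn fun j => LieAlgebra.ad ℝ L (V j)).prod X = 0) → π i X = 0)
    (i ℓ : ℕ) :
    ∃ (D : Finset (Fin k →₀ ℕ)) (c : (Fin k →₀ ℕ) → L →ₗ[ℝ] L),
      (∀ μ ∈ D, (μ.sum fun _ e => e) ≤ ℓ - i) ∧
      ∀ X ∈ g' ℓ, ∀ s : Fin k → ℝ,
        π i ((∑ t ∈ Finset.range (Module.finrank ℝ L),
            ((t.factorial : ℝ)⁻¹) • (LieAlgebra.ad ℝ L (∑ j, s j • U j)) ^ t) X) =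
          ∑ μ ∈ D, (∏ j, s j ^ μ j) • c μ X := by
  classical
  set words := (Finset.range (Module.finrank ℝ L)).sigma fun t => (univ : Finset (Fin t → Fin k))
  set term : (Σ t, Fin t → Fin k) → L →ₗ[ℝ] L := fun p =>
    ((p.1.factorial : ℝ)⁻¹) • π i ∘ₗ (List.ofFn fun m => LieAlgebra.ad ℝ L (U (p.2 m))).prod
  set short := words.filter fun p => p.1 ≤ ℓ - i
  refine ⟨short.image fun p => wordExponent p.2,
    fun μ => ∑ p ∈ short with wordExponent p.2 = μ, term p, ?_, fun X hX s => ?_⟩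
  · simp only [Finset.forall_mem_image, wordExponent_sum]
    exact fun p hp => (Finset.mem_filter.1 hp).2
  have hX' : KilledByWords (LieAlgebra.ad ℝ L) u (ℓ + 1) X := hg' ℓ X hX
  have hlong : ∀ p ∈ words, (∏ m, s (p.2 m)) • term p X ≠ 0 → p.1 ≤ ℓ - i := fun p _ hp => by
    by_contra! hlen
    refine hp ?_
    rw [LinearMap.smul_apply, LinearMap.comp_apply,
      hX'.map_prod_ofFn_apply_eq_zero (hπker i) _ (fun m => hU _) hlen, smul_zero, smul_zero]
  have had : LieAlgebra.ad ℝ L (∑ j, s j • U j) = ∑ j, s j • LieAlgebra.ad ℝ L (U j) := by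
    simp only [map_sum, map_smul]
  calc _ = ∑ p ∈ words, (∏ m, s (p.2 m)) • term p X := by
        rw [had, sum_smul_sum_smul_pow_eq_sum_sigma]
        simp only [term, LinearMap.sum_apply, map_sum, LinearMap.smul_apply, map_smul,
          LinearMap.comp_apply]
        rfl
    _ = ∑ p ∈ short, (∏ m, s (p.2 m)) • term p X := (Finset.sum_filter_of_ne hlong).symm
    _ = _ := by
        simp only [LinearMap.sum_apply, Finset.sum_image_smul_sum_filter, prod_pow_wordExponent]

/-- Controlled polynomial divergence: for `X ∈ 𝔤_ℓ`, the map
`s ↦ πᵢ (exp(ad_{s₁ U₁ + ⋯ + s_k U_k}) X)` is a polynomial map in `s` of degree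
at most `max (ℓ - i) 0` whose coefficients depend linearly on `X`.  Here `u` is
an abelian subalgebra whose elements `W` satisfy `(ad_W)^{dim 𝔤} = 0`
(ad-unipotency), so that the exponential is the truncated series; the spaces
`g' i` are contained in the filtration step `𝔤̃ᵢ`, and the projection `πᵢ`
kills every lower filtration step `𝔤̃_{i'}`, `i' < i`. -/
theorem stmt11 (L : Type*) [LieRing L] [LieAlgebra ℝ L] [FiniteDimensional ℝ L]
    (u : LieSubalgebra ℝ L)
    (hu_ab : ∀ x ∈ u, ∀ y ∈ u, ⁅x, y⁆ = 0)
    (hu_nil : ∀ W ∈ u, (LieAlgebra.ad ℝ L W) ^ (Module.finrank ℝ L) = 0)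
    (k : ℕ) (U : Fin k → L) (hU : ∀ j, U j ∈ u)
    (g' : ℕ → Submodule ℝ L)
    (hg' : ∀ i : ℕ, ∀ X ∈ g' i, ∀ V : Fin (i + 1) → L, (∀ j, V j ∈ u) →
      (List.ofFn fun j => LieAlgebra.ad ℝ L (V j)).prod X = 0)
    (π : ℕ → L →ₗ[ℝ] L)
    (hπker : ∀ i i' : ℕ, i' < i → ∀ X : L,
      (∀ V : Fin (i' + 1) → L, (∀ j, V j ∈ u) →
        (List.ofFn fun j => LieAlgebra.ad ℝ L (V j)).prod X = 0) → π i X = 0)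
    (i ℓ : ℕ) :
    ∃ (D : Finset (Fin k →₀ ℕ)) (c : (Fin k →₀ ℕ) → L →ₗ[ℝ] L),
      (∀ μ ∈ D, (μ.sum fun _ e => e) ≤ ℓ - i) ∧
      ∀ X ∈ g' ℓ, ∀ s : Fin k → ℝ,
        π i ((∑ t ∈ Finset.range (Module.finrank ℝ L),
            ((t.factorial : ℝ)⁻¹) • (LieAlgebra.ad ℝ L (∑ j, s j • U j)) ^ t) X) =
          ∑ μ ∈ D, (∏ j, s j ^ μ j) • c μ X :=
  stmt11_general L u k U hU g' hg' π hπker i ℓ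
end

section
/- Let 𝔤 be a simple real Lie algebra and 𝔲 = 𝔤⁺_X an abelian horocyclic subalgebra with renormalizing element X satisfying ad_X v = v for v ∈ 𝔤⁺_X and ad_X v = −v for v ∈ 𝔤⁻_X. If 𝔷₀ = Z_𝔤(𝔲) ∩ 𝔤⁰_X, then 𝔷 = 𝔷₀ ⊕ [𝔤⁻_X, 𝔷₀] is an ideal of 𝔤 not containing X; hence 𝔷₀ = 0 and the centralizer of 𝔲 in 𝔤 equals 𝔲. -/
/-- Let `𝔤` be a simple real Lie algebra with `𝔤 = 𝔤⁻ ⊕ 𝔤⁰ ⊕ 𝔤⁺` the eigenspace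
decomposition of `ad_X` with eigenvalues `-1, 0, 1`, and let `𝔲 = 𝔤⁺` be abelian
and nonzero.  With `𝔷₀ = Z_𝔤(𝔲) ∩ 𝔤⁰`, the space `𝔷 = 𝔷₀ ⊔ span [𝔤⁻, 𝔷₀]` is an
ideal of `𝔤` not containing `X`; hence `𝔷₀ = 0` and the centralizer of `𝔲` in
`𝔤` equals `𝔲`. -/
theorem stmt13 (L : Type*) [LieRing L] [LieAlgebra ℝ L] [FiniteDimensional ℝ L]
    [LieAlgebra.IsSimple ℝ L]
    (X : L) (gm g0 gp : Submodule ℝ L)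
    (hgm : ∀ v ∈ gm, ⁅X, v⁆ = -v)
    (hg0 : ∀ v ∈ g0, ⁅X, v⁆ = 0)
    (hgp : ∀ v ∈ gp, ⁅X, v⁆ = v)
    (hspan : ∀ Y : L, ∃ a ∈ gm, ∃ b ∈ g0, ∃ c ∈ gp, Y = a + b + c)
    (hab : ∀ v ∈ gp, ∀ w ∈ gp, ⁅v, w⁆ = 0)
    (hne : gp ≠ ⊥) :
    let z0 : Submodule ℝ L :=
      g0 ⊓ ⨅ (u : L) (_ : u ∈ gp), LinearMap.ker (LieAlgebra.ad ℝ L u)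
    let z : Submodule ℝ L :=
      z0 ⊔ Submodule.span ℝ {y | ∃ a ∈ gm, ∃ b ∈ z0, y = ⁅a, b⁆}
    (∀ y ∈ z, ∀ w : L, ⁅w, y⁆ ∈ z) ∧
    X ∉ z ∧
    z0 = ⊥ ∧
    (⨅ (u : L) (_ : u ∈ gp), LinearMap.ker (LieAlgebra.ad ℝ L u)) = gp := by
  intro z0 z
  -- helper: doubling
  have hhalf : ∀ v : L, v + v = 0 → v = 0 := by
    intro v h
    have h2 : (2 : ℝ) • v = 0 := by rw [two_smul]; exact h
    have := smul_eq_zero.mp h2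
    simpa using this.resolve_left (by norm_num)
  -- directness
  have hdir : ∀ a ∈ gm, ∀ b ∈ g0, ∀ c ∈ gp, a + b + c = 0 →
      a = 0 ∧ b = 0 ∧ c = 0 := by
    intro a ha b hb c hc h
    have h1 : -a + c = 0 := by
      have := congrArg (fun y => ⁅X, y⁆) h
      simpa [lie_add, hgm a ha, hg0 b hb, hgp c hc] using this
    have h2 : a + c = 0 := by
      have := congrArg (fun y => ⁅X, y⁆) h1
      simpa [lie_add, hgm a ha, hgp c hc] using this
    have ha0 : a = 0 := by
      have : a + a = 0 := by
        have := congrArg₂ (· + ·) h2 (congrArg Neg.neg h1)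
        simpa [add_comm, add_left_comm, add_assoc] using this
      exact hhalf a this
    have hc0 : c = 0 := by
      have : c + c = 0 := by
        have := congrArg₂ (· + ·) h2 h1
        simpa [ha0, add_comm, add_left_comm, add_assoc] using this
      exact hhalf c this
    refine ⟨ha0, ?_, hc0⟩
    simpa [ha0, hc0] using h
  -- eigenvector characterizations
  have heigm : ∀ y : L, ⁅X, y⁆ = -y → y ∈ gm := by
    intro y hy
    obtain ⟨a, ha, b, hb, c, hc, rfl⟩ := hspan y
    have h0 : (0 : L) + b + (c + c) = 0 := by
      have h1 : ⁅X, a + b + c⁆ = -a + c := by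
        simp [lie_add, hgm a ha, hg0 b hb, hgp c hc]
      rw [hy] at h1
      linear_combination (norm := abel1) -h1
    obtain ⟨-, hb0, hc0⟩ := hdir 0 (zero_mem gm) b hb (c + c) (add_mem hc hc) h0
    have : c = 0 := hhalf c hc0
    simpa [hb0, this] using ha
  have heigp : ∀ y : L, ⁅X, y⁆ = y → y ∈ gp := by
    intro y hy
    obtain ⟨a, ha, b, hb, c, hc, rfl⟩ := hspan y
    have h0 : (a + a) + b + (0 : L) = 0 := by
      have h1 : ⁅X, a + b + c⁆ = -a + c := by
        simp [lie_add, hgm a ha, hg0 b hb, hgp c hc]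
      rw [hy] at h1
      linear_combination (norm := abel1) h1
    obtain ⟨ha0, hb0, -⟩ := hdir (a + a) (add_mem ha ha) b hb 0 (zero_mem gp) h0
    have : a = 0 := hhalf a ha0
    simpa [hb0, this] using hc
  have heig0 : ∀ y : L, ⁅X, y⁆ = 0 → y ∈ g0 := by
    intro y hy
    obtain ⟨a, ha, b, hb, c, hc, rfl⟩ := hspan y
    have h1 : ⁅X, a + b + c⁆ = -a + c := by
      simp [lie_add, hgm a ha, hg0 b hb, hgp c hc]
    rw [hy] at h1
    have h0 : -a + (0 : L) + c = 0 := by linear_combination (norm := abel1) -h1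
    obtain ⟨ha0, -, hc0⟩ := hdir (-a) (neg_mem ha) 0 (zero_mem g0) c hc h0
    have ha0' : a = 0 := by simpa using ha0
    simpa [ha0', hc0] using hb
  -- eigenvalue -2 implies zero
  have heig2 : ∀ y : L, ⁅X, y⁆ = -(y + y) → y = 0 := by
    intro y hy
    obtain ⟨a, ha, b, hb, c, hc, rfl⟩ := hspan y
    have h1 : ⁅X, a + b + c⁆ = -a + c := by
      simp [lie_add, hgm a ha, hg0 b hb, hgp c hc]
    rw [hy] at h1
    have h0 : a + (b + b) + (c + c + c) = 0 := by
      linear_combination (norm := abel1) -h1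
    obtain ⟨ha0, hb0, hc0⟩ := hdir a ha (b + b) (add_mem hb hb) (c + c + c)
      (add_mem (add_mem hc hc) hc) h0
    have hb0' : b = 0 := hhalf b hb0
    have hc1 : c + (c + c) = 0 := by linear_combination (norm := abel1) hc0
    have hc2 : c = 0 := by
      have h3 : (3 : ℝ) • c = 0 := by
        rw [show (3:ℝ) = 2 + 1 by norm_num, add_smul, two_smul, one_smul]
        linear_combination (norm := abel1) hc1
      have := smul_eq_zero.mp h3
      simpa using this.resolve_left (by norm_num)
    simp [ha0, hb0', hc2]
  -- bracket closure lemmas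
  have hmm : ∀ a ∈ gm, ∀ a' ∈ gm, ⁅a, a'⁆ = 0 := by
    intro a ha a' ha'
    apply heig2
    rw [leibniz_lie, hgm a ha, hgm a' ha', neg_lie, lie_neg]
    abel
  have hm0 : ∀ a ∈ gm, ∀ b ∈ g0, ⁅a, b⁆ ∈ gm := by
    intro a ha b hb
    apply heigm
    rw [leibniz_lie, hgm a ha, hg0 b hb, neg_lie, lie_zero, add_zero]
  have hp0 : ∀ c ∈ gp, ∀ b ∈ g0, ⁅c, b⁆ ∈ gp := by
    intro c hc b hb
    apply heigp
    rw [leibniz_lie, hgp c hc, hg0 b hb, lie_zero, add_zero]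
  have h00 : ∀ b ∈ g0, ∀ b' ∈ g0, ⁅b, b'⁆ ∈ g0 := by
    intro b hb b' hb'
    apply heig0
    rw [leibniz_lie, hg0 b hb, hg0 b' hb', zero_lie, lie_zero, add_zero]
  have hpm : ∀ c ∈ gp, ∀ a ∈ gm, ⁅c, a⁆ ∈ g0 := by
    intro c hc a ha
    apply heig0
    rw [leibniz_lie, hgp c hc, hgm a ha, lie_neg]
    abel
  -- membership in z0
  have hz0mem : ∀ y : L, y ∈ z0 ↔ y ∈ g0 ∧ ∀ u ∈ gp, ⁅u, y⁆ = 0 := by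
    intro y
    simp [z0, Submodule.mem_inf, Submodule.mem_iInf, LieAlgebra.ad_apply]
  -- z0 is stable under g0
  have hz0stab : ∀ b' ∈ g0, ∀ b ∈ z0, ⁅b', b⁆ ∈ z0 := by
    intro b' hb' b hb
    rw [hz0mem] at hb ⊢
    refine ⟨h00 b' hb' b hb.1, ?_⟩
    intro u hu
    rw [leibniz_lie, hb.2 u hu, lie_zero, add_zero, hb.2 _ (hp0 u hu b' hb')]
  -- the generating set
  set S : Set L := {y | ∃ a ∈ gm, ∃ b ∈ z0, y = ⁅a, b⁆} with hS
  have hSsub : ∀ a ∈ gm, ∀ b ∈ z0, ⁅a, b⁆ ∈ z :=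
    fun a ha b hb => Submodule.mem_sup_right (Submodule.subset_span ⟨a, ha, b, hb, rfl⟩)
  have hz0sub : ∀ b ∈ z0, b ∈ z := fun b hb => Submodule.mem_sup_left hb
  -- span S ⊆ gm
  have hspanS : Submodule.span ℝ S ≤ gm := by
    rw [Submodule.span_le]
    rintro y ⟨a, ha, b, hb, rfl⟩
    exact hm0 a ha b ((hz0mem b).mp hb).1
  -- z is an ideal
  have hIdeal : ∀ y ∈ z, ∀ w : L, ⁅w, y⁆ ∈ z := by
    have key : ∀ w : L, z ≤ z.comap (LieAlgebra.ad ℝ L w) := by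
      intro w
      obtain ⟨a', ha', b', hb', c, hc, rfl⟩ := hspan w
      apply sup_le
      · -- z0 part
        intro b hb
        simp only [Submodule.mem_comap, LieAlgebra.ad_apply]
        rw [add_lie, add_lie]
        refine add_mem (add_mem ?_ ?_) ?_
        · exact hSsub a' ha' b hb
        · exact hz0sub _ (hz0stab b' hb' b hb)
        · rw [((hz0mem b).mp hb).2 c hc]; exact zero_mem z
      · rw [Submodule.span_le]
        rintro y ⟨a, ha, b, hb, rfl⟩
        simp only [SetLike.mem_coe, Submodule.mem_comap, LieAlgebra.ad_apply]
        have hbg0 := ((hz0mem b).mp hb).1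
        rw [add_lie, add_lie]
        refine add_mem (add_mem ?_ ?_) ?_
        · rw [hmm a' ha' _ (hm0 a ha b hbg0)]; exact zero_mem z
        · rw [leibniz_lie]
          refine add_mem ?_ ?_
          · refine hSsub ⁅b', a⁆ (heigm ⁅b', a⁆ ?_) b hb
            rw [leibniz_lie, hg0 b' hb', hgm a ha, zero_lie, lie_neg, zero_add]
          · exact hSsub a ha _ (hz0stab b' hb' b hb)
        · rw [leibniz_lie, ((hz0mem b).mp hb).2 c hc, lie_zero, add_zero]
          exact hz0sub _ (hz0stab _ (hpm c hc a ha) b hb)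
    intro y hy w
    exact (key w) hy
  -- X is in g0 and X ≠ 0
  have hXg0 : X ∈ g0 := heig0 X (lie_self X)
  have hXne : X ≠ 0 := by
    intro h
    apply hne
    rw [eq_bot_iff]
    intro u hu
    have := hgp u hu
    rw [h, zero_lie] at this
    simpa using this.symm
  -- gm ∩ g0 = 0
  have hmg0 : ∀ y ∈ gm, y ∈ g0 → y = 0 := by
    intro y hy hy0
    have := hgm y hy
    rw [hg0 y hy0] at this
    simpa using this.symm
  -- X ∉ z
  have hXz : X ∉ z := by
    intro hX
    obtain ⟨b, hb, m, hm, hbm⟩ := Submodule.mem_sup.mp hX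
    have hbg0 : b ∈ g0 := ((hz0mem b).mp hb).1
    have hmgm : m ∈ gm := hspanS hm
    have hm0' : m = 0 := hmg0 m hmgm (by
      have : m = X - b := by rw [← hbm]; abel
      rw [this]; exact sub_mem hXg0 hbg0)
    have hXb : X = b := by rw [← hbm, hm0', add_zero]
    have hXz0 : X ∈ z0 := hXb ▸ hb
    apply hne
    rw [eq_bot_iff]
    intro u hu
    have h1 : ⁅u, X⁆ = 0 := ((hz0mem X).mp hXz0).2 u hu
    have h2 : ⁅X, u⁆ = u := hgp u hu
    rw [← lie_skew, h1, neg_zero] at h2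
    rw [Submodule.mem_bot]; exact h2.symm
  -- z = ⊥ via simplicity
  have hzbot : z = ⊥ := by
    let I : LieIdeal ℝ L := { z with lie_mem := fun {x m} hm => hIdeal m hm x }
    have hIz : (I : Submodule ℝ L) = z := rfl
    rcases LieAlgebra.IsSimple.eq_bot_or_eq_top I with h | h
    · rw [← hIz, h]; rfl
    · exfalso; apply hXz
      have hXI : X ∈ I := by rw [h]; exact LieSubmodule.mem_top X
      exact hXI
  have hz0bot : z0 = ⊥ := by
    rw [eq_bot_iff]
    intro y hy
    have : y ∈ z := hz0sub y hy
    rwa [hzbot] at this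
  -- centralizer = gp
  have hC : (⨅ (u : L) (_ : u ∈ gp), LinearMap.ker (LieAlgebra.ad ℝ L u)) = gp := by
    have hCmem : ∀ y : L, y ∈ (⨅ (u : L) (_ : u ∈ gp), LinearMap.ker (LieAlgebra.ad ℝ L u))
        ↔ ∀ u ∈ gp, ⁅u, y⁆ = 0 := by
      intro y; simp [Submodule.mem_iInf, LieAlgebra.ad_apply]
    apply le_antisymm
    · -- W = gm ⊓ C is an ideal
      set W : Submodule ℝ L := gm ⊓ (⨅ (u : L) (_ : u ∈ gp), LinearMap.ker (LieAlgebra.ad ℝ L u))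
        with hWdef
      have hWmem : ∀ y : L, y ∈ W ↔ y ∈ gm ∧ ∀ u ∈ gp, ⁅u, y⁆ = 0 := by
        intro y
        rw [hWdef, Submodule.mem_inf, hCmem]
      have hWideal : ∀ y ∈ W, ∀ w : L, ⁅w, y⁆ ∈ W := by
        intro y hy w
        obtain ⟨hygm, hyC⟩ := (hWmem y).mp hy
        obtain ⟨a', ha', b', hb', c, hc, rfl⟩ := hspan w
        rw [add_lie, add_lie]
        refine add_mem (add_mem ?_ ?_) ?_
        · rw [hmm a' ha' y hygm]; exact zero_mem W
        · rw [hWmem]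
          constructor
          · rw [← lie_skew]; exact neg_mem (hm0 y hygm b' hb')
          · intro u hu
            rw [leibniz_lie, hyC u hu, lie_zero, add_zero, hyC _ (hp0 u hu b' hb')]
        · rw [hyC c hc]; exact zero_mem W
      have hXW : X ∉ W := by
        intro h
        exact hXne (hmg0 X ((hWmem X).mp h).1 hXg0)
      have hWbot : W = ⊥ := by
        let I : LieIdeal ℝ L := { W with lie_mem := fun {x m} hm => hWideal m hm x }
        have hIW : (I : Submodule ℝ L) = W := rfl
        rcases LieAlgebra.IsSimple.eq_bot_or_eq_top I with h | h
        · rw [← hIW, h]; rfl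
        · exfalso
          have hXI : X ∈ I := by rw [h]; exact LieSubmodule.mem_top X
          exact hXW hXI
      -- now show C ≤ gp
      intro y hy
      rw [hCmem] at hy
      obtain ⟨a, ha, b, hb, c, hc, rfl⟩ := hspan y
      have hcomp : ∀ u ∈ gp, ⁅u, a⁆ = 0 ∧ ⁅u, b⁆ = 0 := by
        intro u hu
        have h1 : ⁅u, a⁆ + ⁅u, b⁆ + ⁅u, c⁆ = 0 := by
          rw [← lie_add, ← lie_add]; exact hy u hu
        rw [hab u hu c hc, add_zero] at h1
        have h2 : (0 : L) + ⁅u, a⁆ + ⁅u, b⁆ = 0 := by rw [zero_add]; exact h1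
        obtain ⟨-, h3, h4⟩ := hdir 0 (zero_mem gm) ⁅u, a⁆ (hpm u hu a ha) ⁅u, b⁆
          (hp0 u hu b hb) h2
        exact ⟨h3, h4⟩
      have hb0 : b = 0 := by
        have : b ∈ z0 := (hz0mem b).mpr ⟨hb, fun u hu => (hcomp u hu).2⟩
        rwa [hz0bot, Submodule.mem_bot] at this
      have ha0 : a = 0 := by
        have : a ∈ W := (hWmem a).mpr ⟨ha, fun u hu => (hcomp u hu).1⟩
        rwa [hWbot, Submodule.mem_bot] at this
      rw [ha0, hb0, zero_add, zero_add]
      exact hc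
    · intro y hy
      rw [hCmem]
      intro u hu
      exact hab u hu y hy
  exact ⟨hIdeal, hXz, hz0bot, hC⟩
end

section
/- Let 𝔤 be the Lie algebra of strictly upper triangular d×d real matrices, and for 1 ≤ ℓ ≤ d−1 let 𝔲_ℓ = span{E_{1,j} : 2 ≤ j ≤ ℓ+1}. Then the centralizer of 𝔲_ℓ in 𝔤 is span({E_{1,j} : 2 ≤ j ≤ d} ∪ {E_{i,j} : ℓ+2 ≤ i < j ≤ d}), which has dimension (d−1) + (d−ℓ−2)(d−ℓ−1)/2. -/
/-!
For strictly upper triangular `X` the first column vanishes, so `X E_{1,i} = 0` and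
`[X, E_{1,i}] = -E_{1,i} X`, whose first row is minus row `i` of `X` and whose other rows
vanish. Hence `X` centralizes `𝔲_ℓ` exactly when rows `2, …, ℓ+1` of `X` vanish, i.e. when `X` is supported on the
first row and on the strict upper triangle of rows `ℓ+2, …, d`. These `(d-1) + (d-ℓ-1 choose 2)`
elementary matrices are part of the standard basis, which gives the dimension.
-/

open Matrix Finset

theorem commute_of_mem_span {R A : Type*} [CommSemiring R] [Semiring A] [Algebra R A]
    {s : Set A} {x : A} (hs : ∀ u ∈ s, Commute x u) {u : A} (hu : u ∈ Submodule.span R s) :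
    Commute x u := by
  have : Submodule.span R s ≤ Subalgebra.toSubmodule (Subalgebra.centralizer R {x}) :=
    Submodule.span_le.mpr fun v hv ↦ (Subalgebra.mem_centralizer_iff R).mpr fun g hg ↦ by
      rw [Set.mem_singleton_iff.mp hg]
      exact (hs v hv).eq
  exact (Subalgebra.mem_centralizer_iff R).mp (this hu) x rfl

namespace Matrix

section Semiring

variable {R : Type*} [Semiring R] {n : Type*} [Fintype n] [DecidableEq n]

theorem apply_eq_zero_of_commute_single_one {X : Matrix n n R} {a i j : n} (hji : j ≠ i)
    (h : Commute X (single a i 1)) : X i j = 0 := by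
  simpa [mul_single_apply_of_ne _ _ _ _ _ hji] using (congrFun₂ h.eq a j).symm

theorem commute_single_one_of_col_row_eq_zero {X : Matrix n n R} {a b : n}
    (hcol : ∀ p, X p a = 0) (hrow : ∀ q, X b q = 0) : Commute X (single a b 1) := by
  ext p q
  simp [mul_apply, single, ite_and, hcol, hrow]

end Semiring

section CommRing

variable {R : Type*} [CommRing R] {m n : Type*} [Fintype m] [Fintype n] [DecidableEq m]
  [DecidableEq n]

theorem mem_span_image_single_one_iff {s : Set (m × n)} {X : Matrix m n R} :
    X ∈ Submodule.span R ((fun p ↦ single p.1 p.2 (1 : R)) '' s) ↔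
      ∀ i j, (i, j) ∉ s → X i j = 0 := by
  have hb : (fun p : m × n ↦ single p.1 p.2 (1 : R)) = stdBasis R m n :=
    funext fun p ↦ (stdBasis_eq_single R p.1 p.2).symm
  rw [hb, Module.Basis.mem_span_image]
  constructor
  · intro h i j hij
    by_contra hne
    exact hij (h (Finsupp.mem_support_iff.mpr hne))
  · intro h p hp
    by_contra hps
    exact Finsupp.mem_support_iff.mp hp (h p.1 p.2 hps)

theorem finrank_span_image_single_one [Nontrivial R] (s : Finset (m × n)) :
    Module.finrank R
      (Submodule.span R ((fun p : m × n ↦ single p.1 p.2 (1 : R)) '' (s : Set (m × n)))) =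
      #s := by
  have hb : (fun p : m × n ↦ single p.1 p.2 (1 : R)) = stdBasis R m n :=
    funext fun p ↦ (stdBasis_eq_single R p.1 p.2).symm
  rw [hb, Set.image_eq_range]
  exact (finrank_span_eq_card ((stdBasis R m n).linearIndependent.comp _
    Subtype.val_injective)).trans (Fintype.card_coe s)

end CommRing

end Matrix

theorem Fin.card_filter_le_val (n k : ℕ) : #{i : Fin n | k ≤ (i : ℕ)} = n - k := by
  have h := card_filter_add_card_filter_not (s := univ) (fun i : Fin n ↦ (i : ℕ) < k)
  simp only [Fin.card_filter_val_lt, not_lt, card_univ, Fintype.card_fin] at h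
  omega

theorem Fin.card_filter_le_val_lt (n k : ℕ) :
    #{p : Fin n × Fin n | k ≤ (p.1 : ℕ) ∧ p.1 < p.2} = (n - k).choose 2 := by
  rw [← Fin.card_filter_le_val, ← card_product_filter_lt]
  congr 1
  ext p
  simp only [mem_filter, mem_univ, true_and, mem_product, Fin.lt_def]
  omega

theorem Fin.card_filter_val_eq_zero_le_val (n : ℕ) :
    #{p : Fin n × Fin n | (p.1 : ℕ) = 0 ∧ 1 ≤ (p.2 : ℕ)} = n - 1 := by
  rw [← univ_product_univ,
    filter_product (fun i : Fin n ↦ (i : ℕ) = 0) (fun j : Fin n ↦ 1 ≤ (j : ℕ)), card_product,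
    Fin.card_filter_le_val]
  rcases n with _ | n
  · simp
  · simp [Fin.val_eq_zero_iff, filter_eq']

def centralizerSupport (d ℓ : ℕ) : Finset (Fin d × Fin d) :=
  {p | (p.1 : ℕ) = 0 ∧ 1 ≤ (p.2 : ℕ) ∨ ℓ + 1 ≤ (p.1 : ℕ) ∧ p.1 < p.2}

theorem card_centralizerSupport (d ℓ : ℕ) :
    #(centralizerSupport d ℓ) = (d - 1) + (d - ℓ - 2) * (d - ℓ - 1) / 2 := by
  rw [centralizerSupport, filter_or, card_union_of_disjoint, Fin.card_filter_val_eq_zero_le_val,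
    Fin.card_filter_le_val_lt, Nat.choose_two_right, Nat.mul_comm]
  · rfl
  · rw [disjoint_filter]
    omega

theorem image_centralizerSupport {R : Type*} [Semiring R] {d ℓ : ℕ} (z : Fin d)
    (hz : (z : ℕ) = 0) :
    (fun p : Fin d × Fin d ↦ single p.1 p.2 (1 : R)) '' ↑(centralizerSupport d ℓ) =
      {B | ∃ j : Fin d, 1 ≤ (j : ℕ) ∧ B = single z j 1} ∪
        {B | ∃ i j : Fin d, ℓ + 1 ≤ (i : ℕ) ∧ (i : ℕ) < (j : ℕ) ∧ B = single i j 1} := by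
  ext B
  simp only [centralizerSupport, coe_filter, mem_univ, true_and, Set.mem_image, Prod.exists,
    Set.mem_union, Set.mem_ofPred_eq, Fin.val_fin_lt]
  constructor
  · rintro ⟨i, j, ⟨hi, hj⟩ | ⟨hi, hij⟩, rfl⟩
    · exact Or.inl ⟨j, hj, by rw [Fin.ext (hi.trans hz.symm)]⟩
    · exact Or.inr ⟨i, j, hi, hij, rfl⟩
  · rintro (⟨j, hj, rfl⟩ | ⟨i, j, hi, hij, rfl⟩)
    · exact ⟨z, j, Or.inl ⟨hz, hj⟩, rfl⟩
    · exact ⟨i, j, Or.inr ⟨hi, hij⟩, rfl⟩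

theorem strictUpper_and_commute_iff_support {R : Type*} [CommRing R] {d ℓ : ℕ} (z : Fin d)
    (hz : (z : ℕ) = 0) (X : Matrix (Fin d) (Fin d) R) :
    ((∀ i j : Fin d, (j : ℕ) ≤ (i : ℕ) → X i j = 0) ∧
      ∀ U ∈ Submodule.span R {B | ∃ j : Fin d, 1 ≤ (j : ℕ) ∧ (j : ℕ) ≤ ℓ ∧ B = single z j 1},
        X * U - U * X = 0) ↔
    ∀ i j, (i, j) ∉ centralizerSupport d ℓ → X i j = 0 := by
  simp only [centralizerSupport, mem_filter, mem_univ, true_and, not_or, not_and_or, not_le,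
    not_lt, sub_eq_zero]
  constructor
  · rintro ⟨hlower, hcomm⟩ i j hij
    by_cases hji : (j : ℕ) ≤ i
    · exact hlower i j hji
    · refine apply_eq_zero_of_commute_single_one (a := z) (fun h ↦ hji (h ▸ le_rfl)) ?_
      exact hcomm _ (Submodule.subset_span ⟨i, by omega, by omega, rfl⟩)
  · intro hX
    have hlower (i j : Fin d) (hji : (j : ℕ) ≤ i) : X i j = 0 := hX i j (by omega)
    refine ⟨hlower, fun U hU ↦ commute_of_mem_span ?_ hU⟩
    rintro _ ⟨m, hm1, hmℓ, rfl⟩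
    exact commute_single_one_of_col_row_eq_zero (fun p ↦ hlower p z (by omega))
      fun q ↦ hX m q (by omega)

/-- In the Lie algebra of strictly upper triangular `d × d` real matrices, the
centralizer of `𝔲_ℓ = span{E_{1,j} : 2 ≤ j ≤ ℓ+1}` (indices written `0`-based)
is `span({E_{1,j} : 2 ≤ j ≤ d} ∪ {E_{i,j} : ℓ+2 ≤ i < j ≤ d})`, of dimension
`(d-1) + (d-ℓ-2)(d-ℓ-1)/2`. -/
theorem stmt17 (d ℓ : ℕ) (hd : 2 ≤ d) :
    let E : Fin d → Fin d → Matrix (Fin d) (Fin d) ℝ :=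
      fun i j => Matrix.single i j 1
    let uℓ : Submodule ℝ (Matrix (Fin d) (Fin d) ℝ) :=
      Submodule.span ℝ
        {B | ∃ j : Fin d, 1 ≤ (j : ℕ) ∧ (j : ℕ) ≤ ℓ ∧ B = E ⟨0, by omega⟩ j}
    let Z : Submodule ℝ (Matrix (Fin d) (Fin d) ℝ) :=
      Submodule.span ℝ
        ({B | ∃ j : Fin d, 1 ≤ (j : ℕ) ∧ B = E ⟨0, by omega⟩ j} ∪
          {B | ∃ i j : Fin d, ℓ + 1 ≤ (i : ℕ) ∧ (i : ℕ) < (j : ℕ) ∧ B = E i j})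
    ({X : Matrix (Fin d) (Fin d) ℝ |
        (∀ i j : Fin d, (j : ℕ) ≤ (i : ℕ) → X i j = 0) ∧
        ∀ U ∈ uℓ, X * U - U * X = 0} = ↑Z) ∧
    Module.finrank ℝ ↥Z = (d - 1) + (d - ℓ - 2) * (d - ℓ - 1) / 2 := by
  intro E uℓ Z
  have hZ : Z = Submodule.span ℝ
      ((fun p : Fin d × Fin d ↦ single p.1 p.2 (1 : ℝ)) '' ↑(centralizerSupport d ℓ)) := by
    rw [image_centralizerSupport ⟨0, by omega⟩ rfl]
  refine ⟨?_, by rw [hZ, finrank_span_image_single_one, card_centralizerSupport]⟩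
  ext X
  rw [Set.mem_ofPred_eq, SetLike.mem_coe, hZ, mem_span_image_single_one_iff]
  exact strictUpper_and_commute_iff_support _ rfl X
end
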